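/- Let w_1,…,w_p be mutually orthogonal zero-mean random vectors (E[w_i w_jᵀ] = 0 for i ≠ j) and x a zero-mean random vector, all with square-integrable components. Then for matrices T_1,…,T_p, ‖x − Σ_j T_j w_j‖_E² = ‖(E[x xᵀ])^{1/2}‖² − Σ_j ‖E[x w_jᵀ]·((E[w_j w_jᵀ])^{1/2})†‖² + Σ_j ‖T_j·(E[w_j w_jᵀ])^{1/2} − E[x w_jᵀ]·((E[w_j w_jᵀ])^{1/2})†‖², where ‖·‖ denotes Frobenius norm and ‖u‖_E² = E[‖u‖₂²]. -/

import Mathlib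

open Matrix MeasureTheory
open scoped ENNReal

/-- Cross-covariance matrix E[u v^T] of two (zero-mean) random vectors. -/
noncomputable def cov {Ω : Type*} [MeasureSpace Ω] {a b : ℕ}
    (u : Ω → Fin a → ℝ) (v : Ω → Fin b → ℝ) : Matrix (Fin a) (Fin b) ℝ :=
  Matrix.of fun i j => ∫ ω, u ω i * v ω j

/-- Squared Frobenius norm. -/
def frob2 {a b : ℕ} (A : Matrix (Fin a) (Fin b) ℝ) : ℝ := ∑ i, ∑ j, (A i j) ^ 2

/-- The four Moore–Penrose conditions. -/
def IsMoorePenrose {n : ℕ} (E Ed : Matrix (Fin n) (Fin n) ℝ) : Prop :=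
  E * Ed * E = E ∧ Ed * E * Ed = Ed ∧ (E * Ed)ᵀ = E * Ed ∧ (Ed * E)ᵀ = Ed * E

/-- The positive semidefinite square root of a positive semidefinite matrix
(the definition removed from Mathlib, restored with its old meaning). -/
noncomputable def Matrix.PosSemidef.sqrt {n : Type*} [Fintype n] [DecidableEq n]
    {A : Matrix n n ℝ} (hA : A.PosSemidef) : Matrix n n ℝ :=
  (hA.1.eigenvectorUnitary : Matrix n n ℝ) * diagonal (fun i => √(hA.1.eigenvalues i)) *
    (star hA.1.eigenvectorUnitary : Matrix n n ℝ)

lemma psd_sqrt_mul_self {n : Type*} [Fintype n] [DecidableEq n]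
    {A : Matrix n n ℝ} (hA : A.PosSemidef) : hA.sqrt * hA.sqrt = A := by
  have hU : (star hA.1.eigenvectorUnitary : Matrix n n ℝ) * (hA.1.eigenvectorUnitary : Matrix n n ℝ) = 1 :=
    Unitary.coe_star_mul_self _
  have hd : diagonal (fun i => √(hA.1.eigenvalues i)) * diagonal (fun i => √(hA.1.eigenvalues i))
      = diagonal (RCLike.ofReal ∘ hA.1.eigenvalues) := by
    rw [diagonal_mul_diagonal]; congr 1; ext i
    simp [Real.mul_self_sqrt (hA.eigenvalues_nonneg i)]
  conv_rhs => rw [hA.1.spectral_theorem, Unitary.conjStarAlgAut_apply]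
  unfold Matrix.PosSemidef.sqrt
  calc _ = (hA.1.eigenvectorUnitary : Matrix n n ℝ) * (diagonal (fun i => √(hA.1.eigenvalues i)) *
      ((star hA.1.eigenvectorUnitary : Matrix n n ℝ) * (hA.1.eigenvectorUnitary : Matrix n n ℝ)) *
      diagonal (fun i => √(hA.1.eigenvalues i))) * (star hA.1.eigenvectorUnitary : Matrix n n ℝ) := by
        simp only [Matrix.mul_assoc]
    _ = _ := by rw [hU, Matrix.mul_one, hd]

lemma psd_sqrt_transpose {n : Type*} [Fintype n] [DecidableEq n]
    {A : Matrix n n ℝ} (hA : A.PosSemidef) : hA.sqrtᵀ = hA.sqrt := by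
  unfold Matrix.PosSemidef.sqrt
  rw [transpose_mul, transpose_mul, diagonal_transpose, Matrix.mul_assoc]
  have : ∀ M : Matrix n n ℝ, Mᵀ = star M := fun M => by ext i j; simp
  rw [this (star _), this, star_star]

lemma cov_apply {Ω : Type*} [MeasureSpace Ω] {a b : ℕ}
    (u : Ω → Fin a → ℝ) (v : Ω → Fin b → ℝ) (i : Fin a) (j : Fin b) :
    cov u v i j = ∫ ω, u ω i * v ω j := rfl

lemma intmul {Ω : Type*} [MeasureSpace Ω] (f g : Ω → ℝ)
    (hf : MemLp f 2) (hg : MemLp g 2) : Integrable (fun ω => f ω * g ω) := by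
  rw [← memLp_one_iff_integrable]
  have := hg.smul (p := 2) (q := 2) (r := 1) hf
  exact this

/-- Integral of f times a linear combination. -/
lemma int_mul_sum {Ω : Type*} [MeasureSpace Ω] {ι : Type*} [Fintype ι]
    (f : Ω → ℝ) (hf : MemLp f 2) (g : ι → Ω → ℝ) (hg : ∀ t, MemLp (g t) 2) (c : ι → ℝ) :
    (∫ ω, f ω * (∑ t, c t * g t ω)) = ∑ t, c t * ∫ ω, f ω * g t ω := by
  have h1 : ∀ ω, f ω * (∑ t, c t * g t ω) = ∑ t, c t * (f ω * g t ω) := fun ω => by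
    rw [Finset.mul_sum]; exact Finset.sum_congr rfl fun t _ => by ring
  simp_rw [h1]
  rw [integral_finset_sum _ (fun t _ => ((intmul f (g t) hf (hg t)).const_mul (c t)))]
  exact Finset.sum_congr rfl fun t _ => integral_const_mul _ _

/-- Kernel inclusion: anything annihilated by cov w w is annihilated by cov x w. -/
lemma cov_ker {Ω : Type*} [MeasureSpace Ω] {a b : ℕ}
    (x : Ω → Fin a → ℝ) (w : Ω → Fin b → ℝ)
    (hxL : ∀ i, MemLp (fun ω => x ω i) 2) (hwL : ∀ i, MemLp (fun ω => w ω i) 2)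
    (N : Matrix (Fin b) (Fin b) ℝ) (hN : cov w w * N = 0) : cov x w * N = 0 := by
  ext i j
  set g : Ω → ℝ := fun ω => ∑ a, N a j * w ω a with hgdef
  have hgL : MemLp g 2 :=
    memLp_finset_sum (μ := volume) Finset.univ (fun t _ => (hwL t).const_mul (N t j))
  have hint : (∫ ω, g ω * g ω) = 0 := by
    rw [hgdef]
    have := int_mul_sum (fun ω => ∑ a, N a j * w ω a) hgL
      (fun a ω => w ω a) (fun a => hwL a) (fun a => N a j)
    rw [this]
    have : ∀ a, (∫ ω, (∑ c, N c j * w ω c) * w ω a) = ∫ ω, w ω a * (∑ c, N c j * w ω c) := by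
      intro a; congr 1; ext ω; ring
    simp_rw [this]
    have h2 : ∀ a, (∫ ω, w ω a * (∑ c, N c j * w ω c)) = ∑ c, N c j * cov w w a c := by
      intro a
      rw [int_mul_sum (fun ω => w ω a) (hwL a) (fun c ω => w ω c) hwL (fun c => N c j)]
      rfl
    simp_rw [h2]
    have h3 : ∀ a, (∑ c, N c j * cov w w a c) = (cov w w * N) a j := by
      intro a; rw [Matrix.mul_apply]; exact Finset.sum_congr rfl fun c _ => by ring
    simp_rw [h3, hN]
    simp
  have hg0 : g =ᵐ[volume] 0 := by
    have hsq : (fun ω => g ω ^ 2) =ᵐ[volume] 0 := by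
      refine (integral_eq_zero_iff_of_nonneg (fun ω => sq_nonneg (g ω)) hgL.integrable_sq).mp ?_
      simpa [sq] using hint
    filter_upwards [hsq] with ω h
    have : g ω ^ 2 = 0 := h
    exact pow_eq_zero_iff (by norm_num) |>.mp this
  have hentry : (cov x w * N) i j = ∫ ω, x ω i * g ω := by
    rw [Matrix.mul_apply, hgdef]
    rw [int_mul_sum (fun ω => x ω i) (hxL i) (fun a ω => w ω a) hwL (fun a => N a j)]
    exact Finset.sum_congr rfl fun a _ => by rw [cov_apply x w i a]; ring
  rw [hentry]
  have : (∫ ω, x ω i * g ω) = ∫ _ω : Ω, (0:ℝ) := by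
    refine integral_congr_ae ?_
    filter_upwards [hg0] with ω h
    rw [h]; simp
  simp [this]

/-- Frobenius inner product. -/
def frin {a b : ℕ} (A B : Matrix (Fin a) (Fin b) ℝ) : ℝ := ∑ i, ∑ j, A i j * B i j

lemma frob2_eq {a b : ℕ} (A : Matrix (Fin a) (Fin b) ℝ) : frob2 A = frin A A := by
  simp [frob2, frin, sq]

lemma frin_mul_right {a b c : ℕ} (A : Matrix (Fin a) (Fin c) ℝ)
    (M : Matrix (Fin c) (Fin b) ℝ) (B : Matrix (Fin a) (Fin b) ℝ) :
    frin (A * M) B = frin A (B * Mᵀ) := by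
  simp only [frin, Matrix.mul_apply, Matrix.transpose_apply, Finset.sum_mul, Finset.mul_sum]
  refine Finset.sum_congr rfl fun i _ => ?_
  rw [Finset.sum_comm]
  exact Finset.sum_congr rfl fun k _ => Finset.sum_congr rfl fun j _ => by ring

lemma frin_sub_sub {a b : ℕ} (X Y : Matrix (Fin a) (Fin b) ℝ) :
    frin (X - Y) (X - Y) = frin X X - 2 * frin X Y + frin Y Y := by
  have h : ∀ i j, (X i j - Y i j) * (X i j - Y i j)
      = X i j * X i j - 2 * (X i j * Y i j) + Y i j * Y i j := fun i j => by ring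
  simp only [frin, Matrix.sub_apply, h, Finset.sum_add_distrib, Finset.sum_sub_distrib,
    Finset.mul_sum]

lemma frin_one {a : ℕ} (M : Matrix (Fin a) (Fin a) ℝ) : frin 1 M = ∑ i, M i i := by
  simp [frin, Matrix.one_apply]

/-- Key algebra: C (Sd S) = C when ker W ⊆ ker C and S² = W, S Sd S = S. -/
lemma key_alg {a b : ℕ} (C : Matrix (Fin a) (Fin b) ℝ) (W S Sdm : Matrix (Fin b) (Fin b) ℝ)
    (hS : S * S = W) (hMP : S * Sdm * S = S)
    (hker : ∀ N, W * N = 0 → C * N = 0) : C * Sdm * S = C := by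
  have h1 : S * (Sdm * S - 1) = 0 := by
    rw [Matrix.mul_sub, Matrix.mul_one, ← Matrix.mul_assoc, hMP, sub_self]
  have h2 : W * (Sdm * S - 1) = 0 := by
    rw [← hS, Matrix.mul_assoc, h1, Matrix.mul_zero]
  have h3 := hker _ h2
  rw [Matrix.mul_sub, Matrix.mul_one, sub_eq_zero, ← Matrix.mul_assoc] at h3
  exact h3

/-- Error decomposition for the estimator Σ_j T_j w_j of x in terms of Frobenius norms. -/
theorem stmt10 {Ω : Type*} [MeasureSpace Ω] [IsProbabilityMeasure (volume : Measure Ω)]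
    {m n p : ℕ} (x : Ω → Fin m → ℝ) (w : Fin p → Ω → Fin n → ℝ)
    (hxL : ∀ i, MemLp (fun ω => x ω i) 2)
    (hwL : ∀ j i, MemLp (fun ω => w j ω i) 2)
    (hxmean : ∀ i, (∫ ω, x ω i) = 0)
    (hwmean : ∀ j i, (∫ ω, w j ω i) = 0)
    (horth : ∀ i j, i ≠ j → cov (w i) (w j) = 0)
    (hx : (cov x x).PosSemidef)
    (hw : ∀ j, (cov (w j) (w j)).PosSemidef)
    (Sd : Fin p → Matrix (Fin n) (Fin n) ℝ)
    (hSd : ∀ j, IsMoorePenrose (hw j).sqrt (Sd j))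
    (T : Fin p → Matrix (Fin m) (Fin n) ℝ) :
    (∫ ω, ∑ i, (x ω i - ∑ j, (T j).mulVec (w j ω) i) ^ 2) =
      frob2 hx.sqrt - (∑ j, frob2 (cov x (w j) * Sd j)) +
        ∑ j, frob2 (T j * (hw j).sqrt - cov x (w j) * Sd j) := by
  classical
  -- matrix abbreviations
  have hSS : ∀ j, (hw j).sqrt * (hw j).sqrt = cov (w j) (w j) := fun j => psd_sqrt_mul_self (hw j)
  have hST : ∀ j, ((hw j).sqrt)ᵀ = (hw j).sqrt := fun j => by
    exact psd_sqrt_transpose (hw j)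
  have hkey : ∀ j, cov x (w j) * Sd j * (hw j).sqrt = cov x (w j) := by
    intro j
    refine key_alg _ _ _ _ (hSS j) (hSd j).1 ?_
    exact fun N hN => cov_ker x (w j) hxL (hwL j) N hN
  -- the estimator components
  set c : Fin m → Fin p × Fin n → ℝ := fun i t => T t.1 i t.2 with hc
  set s : Fin m → Ω → ℝ := fun i ω => ∑ t : Fin p × Fin n, c i t * w t.1 ω t.2 with hs
  have hgL : ∀ t : Fin p × Fin n, MemLp (fun ω => w t.1 ω t.2) 2 := fun t => hwL t.1 t.2
  have hsL : ∀ i, MemLp (s i) 2 := fun i => by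
    rw [hs]
    exact memLp_finset_sum (μ := volume) Finset.univ (fun t _ => (hgL t).const_mul (c i t))
  have heL : ∀ i, MemLp (fun ω => x ω i - s i ω) 2 := fun i => (hxL i).sub (hsL i)
  have hrw : ∀ ω i, (∑ j, (T j).mulVec (w j ω) i) = s i ω := by
    intro ω i
    rw [hs]
    simp only [Matrix.mulVec, dotProduct, hc]
    exact (Fintype.sum_prod_type (fun t : Fin p × Fin n => c i t * w t.1 ω t.2)).symm
  -- reduce integral to per-coordinate
  have hsplit : (∫ ω, ∑ i, (x ω i - ∑ j, (T j).mulVec (w j ω) i) ^ 2)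
      = ∑ i, ∫ ω, (x ω i - s i ω) ^ 2 := by
    simp_rw [hrw]
    exact integral_finset_sum _ (fun i _ => (heL i).integrable_sq)
  -- per-coordinate expansion
  have hper : ∀ i, (∫ ω, (x ω i - s i ω) ^ 2) =
      cov x x i i - 2 * (∑ t : Fin p × Fin n, c i t * cov x (w t.1) i t.2)
        + ∑ t : Fin p × Fin n, ∑ u : Fin p × Fin n,
            c i t * (c i u * cov (w t.1) (w u.1) t.2 u.2) := by
    intro i
    have hxs : Integrable (fun ω => x ω i * s i ω) := intmul _ _ (hxL i) (hsL i)
    have hIx : Integrable (fun ω => x ω i ^ 2) := (hxL i).integrable_sq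
    have hIs : Integrable (fun ω => s i ω ^ 2) := (hsL i).integrable_sq
    have e1 : ∀ ω, (x ω i - s i ω) ^ 2
        = x ω i ^ 2 - 2 * (x ω i * s i ω) + s i ω ^ 2 := fun ω => by ring
    have hxs' : (∫ ω, x ω i * s i ω) = ∑ t : Fin p × Fin n, c i t * cov x (w t.1) i t.2 := by
      rw [hs]
      rw [int_mul_sum (fun ω => x ω i) (hxL i) (fun t ω => w t.1 ω t.2) hgL (c i)]
      exact Finset.sum_congr rfl fun t _ => by rw [cov_apply x (w t.1) i t.2]
    have hss : (∫ ω, s i ω ^ 2) = ∑ t : Fin p × Fin n, ∑ u : Fin p × Fin n,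
        c i t * (c i u * cov (w t.1) (w u.1) t.2 u.2) := by
      have e2 : ∀ ω, s i ω ^ 2 = s i ω * s i ω := fun ω => sq (s i ω) ▸ by ring
      simp_rw [e2]
      conv_lhs => rw [show (fun ω => s i ω * s i ω) = fun ω => s i ω * (∑ t : Fin p × Fin n, c i t * w t.1 ω t.2) from by rw [hs]]
      rw [int_mul_sum (s i) (hsL i) (fun t ω => w t.1 ω t.2) hgL (c i)]
      refine Finset.sum_congr rfl fun t _ => ?_
      congr 1
      have : (∫ ω, s i ω * w t.1 ω t.2) = ∫ ω, w t.1 ω t.2 * s i ω := by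
        congr 1; ext ω; ring
      rw [this]
      conv_lhs => rw [show (fun ω => w t.1 ω t.2 * s i ω) = fun ω => w t.1 ω t.2 * (∑ u : Fin p × Fin n, c i u * w u.1 ω u.2) from by rw [hs]]
      rw [int_mul_sum (fun ω => w t.1 ω t.2) (hgL t) (fun u ω => w u.1 ω u.2) hgL (c i)]
      rw [Finset.mul_sum]
      exact Finset.sum_congr rfl fun u _ => by
        rw [cov_apply (w t.1) (w u.1) t.2 u.2]
    calc (∫ ω, (x ω i - s i ω) ^ 2)
        = ∫ ω, (x ω i ^ 2 - 2 * (x ω i * s i ω) + s i ω ^ 2) := by simp_rw [e1]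
      _ = (∫ ω, x ω i ^ 2) - 2 * (∫ ω, x ω i * s i ω) + ∫ ω, s i ω ^ 2 := by
          rw [integral_add (f := fun ω => x ω i ^ 2 - 2 * (x ω i * s i ω))
            (g := fun ω => s i ω ^ 2) (by exact hIx.sub (hxs.const_mul 2)) hIs,
            integral_sub (f := fun ω => x ω i ^ 2)
            (g := fun ω => 2 * (x ω i * s i ω)) hIx (hxs.const_mul 2),
            integral_const_mul]
      _ = _ := by
          rw [hxs', hss, cov_apply x x i i]
          congr 2
          congr 1; ext ω; ring
  -- sum the expansion over i
  have hmid : (∑ i, ∑ t : Fin p × Fin n, c i t * cov x (w t.1) i t.2)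
      = ∑ j, frin (T j) (cov x (w j)) := by
    rw [Finset.sum_comm]
    rw [show (∑ t : Fin p × Fin n, ∑ i, c i t * cov x (w t.1) i t.2)
        = ∑ j, ∑ a, ∑ i, c i (j, a) * cov x (w j) i a from
      Fintype.sum_prod_type (fun t : Fin p × Fin n => ∑ i, c i t * cov x (w t.1) i t.2)]
    refine Finset.sum_congr rfl fun j _ => ?_
    rw [Finset.sum_comm]
    rfl
  have hlast : (∑ i, ∑ t : Fin p × Fin n, ∑ u : Fin p × Fin n,
        c i t * (c i u * cov (w t.1) (w u.1) t.2 u.2))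
      = ∑ j, frin (T j) (T j * cov (w j) (w j)) := by
    have hdiag : ∀ i (t : Fin p × Fin n),
        (∑ u : Fin p × Fin n, c i t * (c i u * cov (w t.1) (w u.1) t.2 u.2))
        = ∑ b, c i t * (c i (t.1, b) * cov (w t.1) (w t.1) t.2 b) := by
      intro i t
      rw [show (∑ u : Fin p × Fin n, c i t * (c i u * cov (w t.1) (w u.1) t.2 u.2))
          = ∑ j', ∑ b, c i t * (c i (j', b) * cov (w t.1) (w j') t.2 b) from
        Fintype.sum_prod_type
          (fun u : Fin p × Fin n => c i t * (c i u * cov (w t.1) (w u.1) t.2 u.2))]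
      rw [Finset.sum_eq_single t.1]
      · intro j' _ hne
        have h0 : cov (w t.1) (w j') = 0 := horth t.1 j' (Ne.symm hne)
        simp [h0]
      · intro h; exact absurd (Finset.mem_univ t.1) h
    simp_rw [hdiag]
    -- now: ∑ i ∑ t:(j,a) ∑ b, c i (j,a) * (c i (j,b) * W j a b)
    rw [show (∑ i, ∑ t : Fin p × Fin n, ∑ b, c i t * (c i (t.1, b) * cov (w t.1) (w t.1) t.2 b))
        = ∑ i, ∑ j, ∑ a, ∑ b, c i (j, a) * (c i (j, b) * cov (w j) (w j) a b) from
      Finset.sum_congr rfl fun i _ => Fintype.sum_prod_type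
        (fun t : Fin p × Fin n => ∑ b, c i t * (c i (t.1, b) * cov (w t.1) (w t.1) t.2 b))]
    rw [Finset.sum_comm]
    refine Finset.sum_congr rfl fun j _ => ?_
    simp only [frin, Matrix.mul_apply, Finset.mul_sum]
    refine Finset.sum_congr rfl fun i _ => ?_
    rw [Finset.sum_comm]
    refine Finset.sum_congr rfl fun a _ => Finset.sum_congr rfl fun b _ => by
      simp only [hc]; ring
  -- assemble LHS
  rw [hsplit]
  simp_rw [hper]
  rw [Finset.sum_add_distrib, Finset.sum_sub_distrib, ← Finset.mul_sum, hmid, hlast]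
  -- RHS computations
  have h1 : frob2 hx.sqrt = ∑ i, cov x x i i := by
    rw [frob2_eq]
    have : frin hx.sqrt hx.sqrt = frin (1 * hx.sqrt) hx.sqrt := by rw [Matrix.one_mul]
    rw [this, frin_mul_right, frin_one]
    congr 1
    ext i
    congr 1
    rw [show hx.sqrtᵀ = hx.sqrt from by exact psd_sqrt_transpose hx,
      psd_sqrt_mul_self hx]
  have h2 : ∀ j, frob2 (T j * (hw j).sqrt - cov x (w j) * Sd j)
      = frin (T j) (T j * cov (w j) (w j)) - 2 * frin (T j) (cov x (w j))
        + frob2 (cov x (w j) * Sd j) := by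
    intro j
    rw [frob2_eq, frin_sub_sub]
    have e1 : frin (T j * (hw j).sqrt) (T j * (hw j).sqrt)
        = frin (T j) (T j * cov (w j) (w j)) := by
      rw [frin_mul_right, Matrix.mul_assoc, hST, hSS]
    have e2 : frin (T j * (hw j).sqrt) (cov x (w j) * Sd j) = frin (T j) (cov x (w j)) := by
      rw [frin_mul_right, Matrix.mul_assoc, hST j, ← Matrix.mul_assoc, hkey]
    rw [e1, e2, ← frob2_eq]
  rw [h1]
  simp_rw [h2]
  rw [Finset.sum_add_distrib, Finset.sum_sub_distrib, ← Finset.mul_sum]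
  ring
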